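/- Let (C, E, s) be an extriangulated category satisfying Condition (WIC), and let (Q, R̃) and (Q̃, R) be two hereditary cotorsion pairs with R̃ ⊆ R, Q̃ ⊆ Q, and Q̃ ∩ R = Q ∩ R̃. Define W₁ = {X : there exists an E-triangle X → R → Q --> with R ∈ R̃, Q ∈ Q̃} and W₂ = {X : there exists an E-triangle R' → Q' → X --> with R' ∈ R̃, Q' ∈ Q̃}. Then W₁ = W₂. -/

import Mathlib

open CategoryTheory Limits

universe w v u

/-- An extriangulated category structure on an additive category `𝒞`, in the sense of
Nakaoka–Palu: a biadditive `Ab`-valued functor `E` together with an additive realization,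
encoded via the predicate `IsTriangle x y δ` meaning that `A ⟶x B ⟶y X` realizes
`δ ∈ E(X,A)`, satisfying (ET1)–(ET4) and their duals. -/
structure ExtriangulatedStructure (𝒞 : Type u) [Category.{v} 𝒞] [Preadditive 𝒞]
    [HasBinaryBiproducts 𝒞] where
  E : 𝒞 → 𝒞 → AddCommGrpCat.{w}
  pull : ∀ {X' X A : 𝒞}, (X' ⟶ X) → E X A → E X' A
  push : ∀ {X A A' : 𝒞}, (A ⟶ A') → E X A → E X A'
  pull_id : ∀ {X A : 𝒞} (δ : E X A), pull (𝟙 X) δ = δ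
  push_id : ∀ {X A : 𝒞} (δ : E X A), push (𝟙 A) δ = δ
  pull_comp : ∀ {X'' X' X A : 𝒞} (c' : X'' ⟶ X') (c : X' ⟶ X) (δ : E X A),
      pull (c' ≫ c) δ = pull c' (pull c δ)
  push_comp : ∀ {X A A' A'' : 𝒞} (a : A ⟶ A') (a' : A' ⟶ A'') (δ : E X A),
      push (a ≫ a') δ = push a' (push a δ)
  pull_push : ∀ {X' X A A' : 𝒞} (c : X' ⟶ X) (a : A ⟶ A') (δ : E X A),
      pull c (push a δ) = push a (pull c δ)
  pull_add : ∀ {X' X A : 𝒞} (c : X' ⟶ X) (δ δ' : E X A),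
      pull c (δ + δ') = pull c δ + pull c δ'
  push_add : ∀ {X A A' : 𝒞} (a : A ⟶ A') (δ δ' : E X A),
      push a (δ + δ') = push a δ + push a δ'
  add_pull : ∀ {X' X A : 𝒞} (c c' : X' ⟶ X) (δ : E X A),
      pull (c + c') δ = pull c δ + pull c' δ
  add_push : ∀ {X A A' : 𝒞} (a a' : A ⟶ A') (δ : E X A),
      push (a + a') δ = push a δ + push a' δ
  IsTriangle : ∀ {A B X : 𝒞}, (A ⟶ B) → (B ⟶ X) → E X A → Prop
  realize_exists : ∀ {X A : 𝒞} (δ : E X A),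
      ∃ (B : 𝒞) (x : A ⟶ B) (y : B ⟶ X), IsTriangle x y δ
  realize_zero : ∀ (A X : 𝒞),
      IsTriangle (biprod.inl : A ⟶ A ⊞ X) (biprod.snd : A ⊞ X ⟶ X) (0 : E X A)
  realize_sum : ∀ {A B X A' B' X' : 𝒞} (x : A ⟶ B) (y : B ⟶ X) (δ : E X A)
      (x' : A' ⟶ B') (y' : B' ⟶ X') (δ' : E X' A'),
      IsTriangle x y δ → IsTriangle x' y' δ' →
      IsTriangle (biprod.map x x') (biprod.map y y')
        (push biprod.inl (pull biprod.fst δ) + push biprod.inr (pull biprod.snd δ'))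
  realize_iso : ∀ {A B B' X : 𝒞} (x : A ⟶ B) (y : B ⟶ X) (δ : E X A) (b : B ≅ B'),
      IsTriangle x y δ → IsTriangle (x ≫ b.hom) (b.inv ≫ y) δ
  realize_mor : ∀ {A B X A' B' X' : 𝒞} {x : A ⟶ B} {y : B ⟶ X} {δ : E X A}
      {x' : A' ⟶ B'} {y' : B' ⟶ X'} {δ' : E X' A'} (a : A ⟶ A') (c : X ⟶ X'),
      IsTriangle x y δ → IsTriangle x' y' δ' → push a δ = pull c δ' →
      ∃ b : B ⟶ B', x ≫ b = a ≫ x' ∧ y ≫ c = b ≫ y'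
  ET3 : ∀ {A B X A' B' X' : 𝒞} {x : A ⟶ B} {y : B ⟶ X} {δ : E X A}
      {x' : A' ⟶ B'} {y' : B' ⟶ X'} {δ' : E X' A'} (a : A ⟶ A') (b : B ⟶ B'),
      IsTriangle x y δ → IsTriangle x' y' δ' → x ≫ b = a ≫ x' →
      ∃ c : X ⟶ X', push a δ = pull c δ' ∧ y ≫ c = b ≫ y'
  ET3op : ∀ {A B X A' B' X' : 𝒞} {x : A ⟶ B} {y : B ⟶ X} {δ : E X A}
      {x' : A' ⟶ B'} {y' : B' ⟶ X'} {δ' : E X' A'} (b : B ⟶ B') (c : X ⟶ X'),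
      IsTriangle x y δ → IsTriangle x' y' δ' → y ≫ c = b ≫ y' →
      ∃ a : A ⟶ A', push a δ = pull c δ' ∧ x ≫ b = a ≫ x'
  ET4 : ∀ {A B D Cv F : 𝒞} (f : A ⟶ B) (f' : B ⟶ D) (δ : E D A)
      (g : B ⟶ Cv) (g' : Cv ⟶ F) (δ' : E F B),
      IsTriangle f f' δ → IsTriangle g g' δ' →
      ∃ (E₀ : 𝒞) (h : A ⟶ Cv) (h' : Cv ⟶ E₀) (d : D ⟶ E₀) (e : E₀ ⟶ F) (δ'' : E E₀ A),
        IsTriangle h h' δ'' ∧ IsTriangle d e (push f' δ') ∧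
        h = f ≫ g ∧ f' ≫ d = g ≫ h' ∧ g' = h' ≫ e ∧
        pull d δ'' = δ ∧ push f δ'' = pull e δ'
  ET4op : ∀ {D B A F Cv : 𝒞} (i : D ⟶ B) (p : B ⟶ A) (δ : E A D)
      (j : F ⟶ Cv) (q : Cv ⟶ B) (δ' : E B F),
      IsTriangle i p δ → IsTriangle j q δ' →
      ∃ (E₀ : 𝒞) (i' : E₀ ⟶ Cv) (p' : Cv ⟶ A) (m : F ⟶ E₀) (n : E₀ ⟶ D) (δ'' : E A E₀),
        IsTriangle i' p' δ'' ∧ IsTriangle m n (pull i δ') ∧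
        p' = q ≫ p ∧ i' ≫ q = n ≫ i ∧ j = m ≫ i' ∧
        push n δ'' = δ ∧ pull p δ'' = push m δ'

namespace ExtriangulatedStructure

variable {𝒞 : Type u} [Category.{v} 𝒞] [Preadditive 𝒞] [HasBinaryBiproducts 𝒞]
variable (S : ExtriangulatedStructure.{w} 𝒞)

/-- A morphism is an inflation if it occurs as the first map of some `E`-triangle. -/
def IsInflation {A B : 𝒞} (f : A ⟶ B) : Prop :=
  ∃ (X : 𝒞) (g : B ⟶ X) (δ : S.E X A), S.IsTriangle f g δ

/-- A morphism is a deflation if it occurs as the second map of some `E`-triangle. -/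
def IsDeflation {B X : 𝒞} (g : B ⟶ X) : Prop :=
  ∃ (A : 𝒞) (f : A ⟶ B) (δ : S.E X A), S.IsTriangle f g δ

/-- Condition (WIC). -/
def WIC : Prop :=
  (∀ {A B X : 𝒞} (f : A ⟶ B) (g : B ⟶ X), S.IsInflation (f ≫ g) → S.IsInflation f) ∧
  (∀ {A B X : 𝒞} (f : A ⟶ B) (g : B ⟶ X), S.IsDeflation (f ≫ g) → S.IsDeflation g)

/-- `(a, b, c)` is a morphism of `E`-triangles. -/
def IsTriangleMor {A B X A' B' X' : 𝒞} (x : A ⟶ B) (y : B ⟶ X) (δ : S.E X A)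
    (x' : A' ⟶ B') (y' : B' ⟶ X') (δ' : S.E X' A')
    (a : A ⟶ A') (b : B ⟶ B') (c : X ⟶ X') : Prop :=
  x ≫ b = a ≫ x' ∧ y ≫ c = b ≫ y' ∧ S.push a δ = S.pull c δ'

/-- A cotorsion pair `(𝒬, ℛ)`: `E(𝒬, ℛ) = 0` and every object admits the two
approximation `E`-triangles. -/
def CotorsionPair (𝒬 ℛ : Set 𝒞) : Prop :=
  (∀ (Q R : 𝒞), Q ∈ 𝒬 → R ∈ ℛ → ∀ δ : S.E Q R, δ = 0) ∧
  (∀ X : 𝒞, ∃ (R Q : 𝒞) (f : R ⟶ Q) (g : Q ⟶ X) (δ : S.E X R),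
      S.IsTriangle f g δ ∧ Q ∈ 𝒬 ∧ R ∈ ℛ) ∧
  (∀ X : 𝒞, ∃ (R Q : 𝒞) (f : X ⟶ R) (g : R ⟶ Q) (δ : S.E Q X),
      S.IsTriangle f g δ ∧ Q ∈ 𝒬 ∧ R ∈ ℛ)

/-- A cotorsion pair is hereditary if `𝒬` is closed under cocones of deflations and
`ℛ` is closed under cones of inflations. -/
def Hereditary (𝒬 ℛ : Set 𝒞) : Prop :=
  (∀ {A B X : 𝒞} (f : A ⟶ B) (g : B ⟶ X) (δ : S.E X A),
      S.IsTriangle f g δ → B ∈ 𝒬 → X ∈ 𝒬 → A ∈ 𝒬) ∧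
  (∀ {A B X : 𝒞} (f : A ⟶ B) (g : B ⟶ X) (δ : S.E X A),
      S.IsTriangle f g δ → A ∈ ℛ → B ∈ ℛ → X ∈ ℛ)

/-- A class of objects is thick: closed under direct summands and satisfying the
2-out-of-3 property on `E`-triangles. -/
def Thick (𝒲 : Set 𝒞) : Prop :=
  (∀ {X Y : 𝒞}, Y ∈ 𝒲 → (∃ (i : X ⟶ Y) (p : Y ⟶ X), i ≫ p = 𝟙 X) → X ∈ 𝒲) ∧
  (∀ {A B X : 𝒞} (f : A ⟶ B) (g : B ⟶ X) (δ : S.E X A), S.IsTriangle f g δ →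
    (A ∈ 𝒲 → B ∈ 𝒲 → X ∈ 𝒲) ∧ (A ∈ 𝒲 → X ∈ 𝒲 → B ∈ 𝒲) ∧ (B ∈ 𝒲 → X ∈ 𝒲 → A ∈ 𝒲))

/-- `(𝒬, 𝒲, ℛ)` is a Hovey triple. -/
def HoveyTriple (𝒬 𝒲 ℛ : Set 𝒞) : Prop :=
  S.Thick 𝒲 ∧ S.CotorsionPair 𝒬 (𝒲 ∩ ℛ) ∧ S.CotorsionPair (𝒬 ∩ 𝒲) ℛ

end ExtriangulatedStructure

/-! If `X → R → Q` is an `E`-triangle with `R ∈ R̃` and `Q ∈ Q̃`, take a `(𝒬, R̃)`-approximation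
`R' → Q' → R`. Heredity makes `R̃` closed under extensions, so `Q' ∈ 𝒬 ∩ R̃ = Q̃ ∩ ℛ`. Composing the
deflations `Q' → R → Q`, (ET4)ᵒᵖ produces `E`-triangles `E' → Q' → Q` and `R' → E' → X`, and
`E' ∈ Q̃` by heredity of `Q̃`. The reverse inclusion is dual. -/

namespace ExtriangulatedStructure

variable {𝒞 : Type u} [Category.{v} 𝒞] [Preadditive 𝒞] [HasBinaryBiproducts 𝒞]
variable (S : ExtriangulatedStructure.{w} 𝒞)

lemma pull_zero {X' X A : 𝒞} (c : X' ⟶ X) : S.pull c (0 : S.E X A) = 0 := by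
  simpa using S.pull_add c (0 : S.E X A) 0

lemma push_zero {X A A' : 𝒞} (a : A ⟶ A') : S.push a (0 : S.E X A) = 0 := by
  simpa using S.push_add a (0 : S.E X A) 0

section Triangles

variable {A B C : 𝒞} {x : A ⟶ B} {y : B ⟶ C}

lemma push_eq_zero_of_isTriangle {δ : S.E C A} (ht : S.IsTriangle x y δ) : S.push x δ = 0 := by
  obtain ⟨c, hc, -⟩ := S.ET3 x biprod.inl ht (S.realize_zero B C) rfl
  rw [hc, S.pull_zero]

lemma comp_eq_zero_of_isTriangle {δ : S.E C A} (ht : S.IsTriangle x y δ) : x ≫ y = 0 := by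
  obtain ⟨b, hxb, hyb⟩ := S.realize_mor x (𝟙 C) ht (S.realize_zero B C)
    (by rw [S.pull_id, S.push_eq_zero_of_isTriangle ht])
  rw [Category.comp_id] at hyb
  rw [hyb, ← Category.assoc, hxb, Category.assoc, biprod.inl_snd, comp_zero]

lemma exists_desc_of_isTriangle {Z : 𝒞} {δ : S.E C A} (ht : S.IsTriangle x y δ) (f : B ⟶ Z)
    (hf : x ≫ f = 0) : ∃ g : C ⟶ Z, y ≫ g = f := by
  obtain ⟨g, -, hg⟩ := S.ET3 x (biprod.lift (𝟙 B) f) ht (S.realize_zero B Z)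
    (by apply biprod.hom_ext <;> simp [hf])
  exact ⟨g, by simpa using hg⟩

lemma exists_retraction_of_isTriangle_zero (ht : S.IsTriangle x y (0 : S.E C A)) :
    ∃ r : B ⟶ A, x ≫ r = 𝟙 A := by
  obtain ⟨b, hxb, -⟩ := S.realize_mor (𝟙 A) (𝟙 C) ht (S.realize_zero A C)
    (by rw [S.push_id, S.pull_id])
  exact ⟨b ≫ biprod.fst, by rw [← Category.assoc, hxb, Category.id_comp, biprod.inl_fst]⟩

lemma exists_section_of_isTriangle_zero (ht : S.IsTriangle x y (0 : S.E C A)) :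
    ∃ s : C ⟶ B, s ≫ y = 𝟙 C := by
  obtain ⟨b, -, hyb⟩ := S.realize_mor (𝟙 A) (𝟙 C) (S.realize_zero A C) ht
    (by rw [S.push_id, S.pull_id])
  exact ⟨biprod.inr ≫ b, by rw [Category.assoc, ← hyb, Category.comp_id, biprod.inr_snd]⟩

lemma exists_isTriangle_zero_reverse (ht : S.IsTriangle x y (0 : S.E C A)) :
    ∃ (x' : C ⟶ B) (y' : B ⟶ A), S.IsTriangle x' y' (0 : S.E A C) := by
  obtain ⟨r, hxr⟩ := S.exists_retraction_of_isTriangle_zero ht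
  obtain ⟨s, hsy⟩ := S.exists_section_of_isTriangle_zero ht
  have hxy := S.comp_eq_zero_of_isTriangle ht
  -- `𝟙 - r ≫ x` kills `x`, so it is `y ≫ g`; this `g` is the inclusion of `C` into `B ≅ C ⊞ A`.
  obtain ⟨g, hg⟩ := S.exists_desc_of_isTriangle ht (𝟙 B - r ≫ x) (by simp [reassoc_of% hxr])
  have hgy : g ≫ y = 𝟙 C :=
    calc g ≫ y = s ≫ (y ≫ g) ≫ y := by simp only [← Category.assoc, hsy, Category.id_comp]
      _ = 𝟙 C := by simp [hg, hxy, hsy]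
  have hgr : g ≫ r = 0 :=
    calc g ≫ r = s ≫ (y ≫ g) ≫ r := by simp only [← Category.assoc, hsy, Category.id_comp]
      _ = 0 := by simp [hg, hxr]
  let b : BinaryBicone C A :=
    { pt := B, fst := y, snd := r, inl := g, inr := x,
      inl_fst := hgy, inl_snd := hgr, inr_fst := hxy, inr_snd := hxr }
  let e : B ≅ C ⊞ A := biprod.uniqueUpToIso C A <| isBinaryBilimitOfTotal b <| by
    change y ≫ g + r ≫ x = 𝟙 B
    rw [hg, sub_add_cancel]
  exact ⟨_, _, S.realize_iso biprod.inl biprod.snd 0 e.symm (S.realize_zero C A)⟩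

end Triangles

lemma ext_left_eq_zero_of_isTriangle {V Z U W : 𝒞} {x : V ⟶ Z} {y : Z ⟶ U} {κ : S.E U V}
    (ht : S.IsTriangle x y κ) (hV : ∀ η : S.E V W, η = 0) (hU : ∀ η : S.E U W, η = 0)
    (ξ : S.E Z W) : ξ = 0 := by
  obtain ⟨M, u, v, hξ⟩ := S.realize_exists ξ
  obtain ⟨E₀, -, -, m, n, δ, -, hm, -, -, -, -, hyδ⟩ := S.ET4op x y κ u v ξ ht hξ
  rw [hV (S.pull x ξ)] at hm
  obtain ⟨r, hmr⟩ := S.exists_retraction_of_isTriangle_zero hm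
  calc ξ = S.push (m ≫ r) ξ := by rw [hmr, S.push_id]
    _ = S.pull y (S.push r δ) := by rw [S.push_comp, ← hyδ, S.pull_push]
    _ = 0 := by rw [hU (S.push r δ), S.pull_zero]

lemma ext_right_eq_zero_of_isTriangle {V Z U W : 𝒞} {x : V ⟶ Z} {y : Z ⟶ U} {κ : S.E U V}
    (ht : S.IsTriangle x y κ) (hV : ∀ η : S.E W V, η = 0) (hU : ∀ η : S.E W U, η = 0)
    (ξ : S.E W Z) : ξ = 0 := by
  obtain ⟨M, u, v, hξ⟩ := S.realize_exists ξ
  obtain ⟨E₀, -, -, d, e, δ, -, he, -, -, -, -, hxδ⟩ := S.ET4 x y κ u v ξ ht hξ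
  rw [hU (S.push y ξ)] at he
  obtain ⟨s, hse⟩ := S.exists_section_of_isTriangle_zero he
  calc ξ = S.pull (s ≫ e) ξ := by rw [hse, S.pull_id]
    _ = S.push x (S.pull s δ) := by rw [S.pull_comp, ← hxδ, S.pull_push]
    _ = 0 := by rw [hV (S.pull s δ), S.push_zero]

variable {S}

/-- The approximation `R → Q → B` splits since `E(B, R) = 0`; (ET4)ᵒᵖ puts `R` in `𝒬`, and then
`B` is the cocone of the split deflation `Q → R`. -/
lemma CotorsionPair.mem_fst_of_isTriangle {𝒬 ℛ : Set 𝒞} (hcp : S.CotorsionPair 𝒬 ℛ)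
    (hh : S.Hereditary 𝒬 ℛ) {A B C : 𝒞} {x : A ⟶ B} {y : B ⟶ C} {δ : S.E C A}
    (ht : S.IsTriangle x y δ) (hA : A ∈ 𝒬) (hC : C ∈ 𝒬) : B ∈ 𝒬 := by
  obtain ⟨R, Q, j, q, σ, hσ, hQ, hR⟩ := hcp.2.1 B
  rw [S.ext_left_eq_zero_of_isTriangle ht (hcp.1 A R hA hR) (hcp.1 C R hC hR) σ] at hσ
  obtain ⟨K, i', p', m, n, δ', hK, hmn, -, -, -, -, -⟩ := S.ET4op x y δ j q 0 ht hσ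
  have hRQ : R ∈ 𝒬 := hh.1 m n _ hmn (hh.1 i' p' δ' hK hQ hC) hA
  obtain ⟨x', y', hrev⟩ := S.exists_isTriangle_zero_reverse hσ
  exact hh.1 x' y' _ hrev hQ hRQ

lemma CotorsionPair.mem_snd_of_isTriangle {𝒬 ℛ : Set 𝒞} (hcp : S.CotorsionPair 𝒬 ℛ)
    (hh : S.Hereditary 𝒬 ℛ) {A B C : 𝒞} {x : A ⟶ B} {y : B ⟶ C} {δ : S.E C A}
    (ht : S.IsTriangle x y δ) (hA : A ∈ ℛ) (hC : C ∈ ℛ) : B ∈ ℛ := by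
  obtain ⟨R, Q, f, g, σ, hσ, hQ, hR⟩ := hcp.2.2 B
  rw [S.ext_right_eq_zero_of_isTriangle ht (hcp.1 Q A hQ hA) (hcp.1 Q C hQ hC) σ] at hσ
  obtain ⟨K, h, h', d, e, δ', hK, hde, -, -, -, -, -⟩ := S.ET4 x y δ f g 0 ht hσ
  have hQR : Q ∈ ℛ := hh.2 d e _ hde hC (hh.2 h h' δ' hK hA hR)
  obtain ⟨x', y', hrev⟩ := S.exists_isTriangle_zero_reverse hσ
  exact hh.2 x' y' _ hrev hQR hR

variable (S)

def coconeClass (ℛ 𝒬 : Set 𝒞) : Set 𝒞 :=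
  {X | ∃ (R Q : 𝒞) (f : X ⟶ R) (g : R ⟶ Q) (δ : S.E Q X), S.IsTriangle f g δ ∧ R ∈ ℛ ∧ Q ∈ 𝒬}

def coneClass (ℛ 𝒬 : Set 𝒞) : Set 𝒞 :=
  {X | ∃ (R Q : 𝒞) (f : R ⟶ Q) (g : Q ⟶ X) (δ : S.E X R), S.IsTriangle f g δ ∧ R ∈ ℛ ∧ Q ∈ 𝒬}

lemma coconeClass_subset_coneClass {𝒬 ℛ Qt Rt : Set 𝒞} (hcp1 : S.CotorsionPair 𝒬 Rt)
    (hh1 : S.Hereditary 𝒬 Rt) (hh2 : S.Hereditary Qt ℛ) (hmeet : 𝒬 ∩ Rt ⊆ Qt) :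
    S.coconeClass Rt Qt ⊆ S.coneClass Rt Qt := by
  rintro X ⟨R₁, Q₁, f, g, δ, ht, hR₁, hQ₁⟩
  obtain ⟨R₂, Q₂, j, q, θ, hθ, hQ₂, hR₂⟩ := hcp1.2.1 R₁
  have hQ₂Qt : Q₂ ∈ Qt := hmeet ⟨hQ₂, hcp1.mem_snd_of_isTriangle hh1 hθ hR₂ hR₁⟩
  obtain ⟨E', i', p', m, n, δ', hE', hmn, -, -, -, -, -⟩ := S.ET4op f g δ j q θ ht hθ
  exact ⟨R₂, E', m, n, _, hmn, hR₂, hh2.1 i' p' δ' hE' hQ₂Qt hQ₁⟩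

lemma coneClass_subset_coconeClass {𝒬 ℛ Qt Rt : Set 𝒞} (hcp2 : S.CotorsionPair Qt ℛ)
    (hh2 : S.Hereditary Qt ℛ) (hh1 : S.Hereditary 𝒬 Rt) (hmeet : Qt ∩ ℛ ⊆ Rt) :
    S.coneClass Rt Qt ⊆ S.coconeClass Rt Qt := by
  rintro X ⟨R₁, Q₁, f, g, δ, ht, hR₁, hQ₁⟩
  obtain ⟨R₂, Q₂, u, v, θ, hθ, hQ₂, hR₂⟩ := hcp2.2.2 Q₁
  have hR₂Rt : R₂ ∈ Rt := hmeet ⟨hcp2.mem_fst_of_isTriangle hh2 hθ hQ₁ hQ₂, hR₂⟩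
  obtain ⟨E', h, h', d, e, δ', hE', hde, -, -, -, -, -⟩ := S.ET4 f g δ u v θ ht hθ
  exact ⟨E', Q₂, d, e, _, hde, hh1.2 h h' δ' hE' hR₁ hR₂Rt, hQ₂⟩

end ExtriangulatedStructure

open CategoryTheory Limits in
theorem stmt4_general {𝒞 : Type u} [Category.{v} 𝒞] [Preadditive 𝒞] [HasBinaryBiproducts 𝒞]
    (S : ExtriangulatedStructure.{w} 𝒞)
    (𝒬 ℛ Qt Rt : Set 𝒞)
    (hcp1 : S.CotorsionPair 𝒬 Rt) (hh1 : S.Hereditary 𝒬 Rt)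
    (hcp2 : S.CotorsionPair Qt ℛ) (hh2 : S.Hereditary Qt ℛ)
    (hmeet : Qt ∩ ℛ = 𝒬 ∩ Rt) :
    {X : 𝒞 | ∃ (R Q : 𝒞) (f : X ⟶ R) (g : R ⟶ Q) (δ : S.E Q X),
        S.IsTriangle f g δ ∧ R ∈ Rt ∧ Q ∈ Qt} =
    {X : 𝒞 | ∃ (R Q : 𝒞) (f : R ⟶ Q) (g : Q ⟶ X) (δ : S.E X R),
        S.IsTriangle f g δ ∧ R ∈ Rt ∧ Q ∈ Qt} :=
  Set.Subset.antisymm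
    (S.coconeClass_subset_coneClass hcp1 hh1 hh2 (hmeet.ge.trans Set.inter_subset_left))
    (S.coneClass_subset_coconeClass hcp2 hh2 hh1 (hmeet.le.trans Set.inter_subset_right))

open CategoryTheory Limits in
/-- the two descriptions of the class `W` coincide. -/
theorem stmt4 {𝒞 : Type u} [Category.{v} 𝒞] [Preadditive 𝒞] [HasBinaryBiproducts 𝒞]
    (S : ExtriangulatedStructure.{w} 𝒞) (hWIC : S.WIC)
    (𝒬 ℛ Qt Rt : Set 𝒞)
    (hcp1 : S.CotorsionPair 𝒬 Rt) (hh1 : S.Hereditary 𝒬 Rt)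
    (hcp2 : S.CotorsionPair Qt ℛ) (hh2 : S.Hereditary Qt ℛ)
    (hRR : Rt ⊆ ℛ) (hQQ : Qt ⊆ 𝒬) (hmeet : Qt ∩ ℛ = 𝒬 ∩ Rt) :
    {X : 𝒞 | ∃ (R Q : 𝒞) (f : X ⟶ R) (g : R ⟶ Q) (δ : S.E Q X),
        S.IsTriangle f g δ ∧ R ∈ Rt ∧ Q ∈ Qt} =
    {X : 𝒞 | ∃ (R Q : 𝒞) (f : R ⟶ Q) (g : Q ⟶ X) (δ : S.E X R),
        S.IsTriangle f g δ ∧ R ∈ Rt ∧ Q ∈ Qt} :=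
  stmt4_general S 𝒬 ℛ Qt Rt hcp1 hh1 hcp2 hh2 hmeet
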